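/- arXiv:math/0703241 — 7 statements merged into one kernel-verified Lean document; each statement's English description precedes it below -/
import Mathlib

section
/- Let Σ be a subshift on the alphabet A. Then Σ includes a 2-SFT whose alphabet is all of A if and only if there exists a map φ : A → A such that for every letter a ∈ A, the infinite word (φ^j(a))_{j∈ℕ} belongs to Σ. -/
variable {A : Type*}

/-- The onesided shift on `A^ℕ`. -/
def shiftN (z : ℕ → A) : ℕ → A := fun i => z (i + 1)

/-- The twosided shift on `A^ℤ`. -/
def shiftZ (x : ℤ → A) : ℤ → A := fun i => x (i + 1)

/-- A (onesided) subshift: a closed, shift-stable set of infinite words. -/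
def IsSubshift [TopologicalSpace A] (S : Set (ℕ → A)) : Prop :=
  IsClosed S ∧ ∀ z ∈ S, shiftN z ∈ S

/-- A 2-SFT: a subshift given by a set of forbidden words of length 2. -/
def IsTwoSFT (S : Set (ℕ → A)) : Prop :=
  ∃ Fb : Set (A × A), S = {z | ∀ i : ℕ, (z i, z (i + 1)) ∉ Fb}

/-- A k-SFT: a subshift given by a set of forbidden words of length k. -/
def IsKSFT (k : ℕ) (S : Set (ℕ → A)) : Prop :=
  ∃ Fb : Set (Fin k → A), S = {z | ∀ i : ℕ, (fun j : Fin k => z (i + (j : ℕ))) ∉ Fb}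

/-- A subshift of finite type. -/
def IsSFT (S : Set (ℕ → A)) : Prop := ∃ k : ℕ, IsKSFT k S

/-- A cellular automaton: a continuous self-map of `A^ℤ` commuting with the shift. -/
def IsCA [TopologicalSpace A] (F : (ℤ → A) → (ℤ → A)) : Prop :=
  Continuous F ∧ ∀ x, F (shiftZ x) = shiftZ (F x)

/-- The trace of `F` with initial condition `x`: the 0th column of the space-time diagram. -/
def caTrace (F : (ℤ → A) → (ℤ → A)) (x : ℤ → A) : ℕ → A := fun j => F^[j] x 0

/-- The trace subshift of `F`. -/
def traceSubshift (F : (ℤ → A) → (ℤ → A)) : Set (ℕ → A) := Set.range (caTrace F)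

/-- A subshift is traceable if it is the trace subshift of some CA. -/
def Traceable [TopologicalSpace A] (S : Set (ℕ → A)) : Prop :=
  ∃ F : (ℤ → A) → (ℤ → A), IsCA F ∧ traceSubshift F = S

/-- The q-th projection of an infinite word over the alphabet `A^k`. -/
def proj {k : ℕ} (q : Fin k) (z : ℕ → (Fin k → A)) : ℕ → A := fun j => z j q

/-- `π(Γ)`: the union of all projections. -/
def projAll {k : ℕ} (Γ : Set (ℕ → (Fin k → A))) : Set (ℕ → A) :=
  ⋃ q : Fin k, proj q '' Γ

/-- A subshift `S` on `A` is T1 if there is a 2-SFT `Γ ⊆ (A^k)^ℕ` with `π₀(Γ) = π(Γ) = S`. -/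
def IsT1 (S : Set (ℕ → A)) : Prop :=
  ∃ k : ℕ, ∃ hk : 0 < k, ∃ Γ : Set (ℕ → (Fin k → A)),
    IsTwoSFT Γ ∧ proj (⟨0, hk⟩ : Fin k) '' Γ = S ∧ projAll Γ = S

/-- A onesided CA: one admitting a local rule of anchor 0. -/
def IsOnesidedCA {C : Type*} (F : (ℤ → C) → (ℤ → C)) : Prop :=
  ∃ d : ℕ, ∃ f : (Fin d → C) → C, ∀ x i, F x i = f (fun j => x (i + (j : ℕ)))

/-- `S` is the k-trace of a onesided CA on some alphabet `B ⊆ A^k`. -/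
def KTraceable (k : ℕ) (S : Set (ℕ → A)) : Prop :=
  ∃ B : Set (Fin k → A), ∃ F : (ℤ → ↥B) → (ℤ → ↥B), IsOnesidedCA F ∧
    S = ⋃ q : Fin k, (fun z : ℕ → ↥B => fun j => ((z j : Fin k → A) q)) '' Set.range (caTrace F)

/-- `S` is a factor of `Γ`: a surjective continuous shift-commuting map from `Γ` onto `S`. -/
def IsFactorOf {B : Type*} [TopologicalSpace A] [TopologicalSpace B]
    (S : Set (ℕ → A)) (Γ : Set (ℕ → B)) : Prop :=
  ∃ φ : (ℕ → B) → (ℕ → A), ContinuousOn φ Γ ∧ φ '' Γ = S ∧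
    ∀ z ∈ Γ, φ (shiftN z) = shiftN (φ z)

/-- The language of a subshift: all finite factors of its elements. -/
def lang (S : Set (ℕ → A)) : Language A :=
  {w | ∃ z ∈ S, ∃ i : ℕ, w = List.ofFn (fun j : Fin w.length => z (i + (j : ℕ)))}

/-- A transitive subshift. -/
def IsTransitiveSubshift (S : Set (ℕ → A)) : Prop :=
  ∀ u ∈ lang S, ∀ v ∈ lang S, ∃ w : List A, u ++ w ++ v ∈ lang S

/-- A T2 subshift: sofic, and including an infinite transitive subshift. -/
def IsT2 [TopologicalSpace A] (S : Set (ℕ → A)) : Prop :=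
  (lang S).IsRegular ∧ ∃ Γ ⊆ S, IsSubshift Γ ∧ Γ.Infinite ∧ IsTransitiveSubshift Γ

/-- `B^ω`: infinite concatenations of words from `B ⊆ A^k`. -/
def Bomega {k : ℕ} (B : Set (Fin k → A)) : Set (ℕ → A) :=
  {z | ∀ i : ℕ, (fun q : Fin k => z (i * k + (q : ℕ))) ∈ B}

/-- A T3 subshift: T0 via a map `φ`, together with a periodic word `w ∉ φ(A)^*`. -/
def IsT3 (S : Set (ℕ → A)) : Prop :=
  ∃ φ : A → A, (∀ a : A, (fun j => φ^[j] a) ∈ S) ∧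
    ∃ w : List A, w ≠ [] ∧ (∃ a ∈ w, a ∉ Set.range φ) ∧
      ∃ z ∈ S, (∀ j : ℕ, z (j + w.length) = z j) ∧ ∀ i : Fin w.length, z (i : ℕ) = w.get i

/-- A subshift `S` on alphabet `A` includes a 2-SFT whose alphabet is all of
`A` if and only if there is `φ : A → A` with `(φ^j(a))_{j∈ℕ} ∈ S` for every `a ∈ A`. -/
theorem stmt0 [Fintype A] [TopologicalSpace A] [DiscreteTopology A]
    (hA : 2 ≤ Fintype.card A) (S : Set (ℕ → A)) (hS : IsSubshift S) :
    (∃ Γ : Set (ℕ → A), IsTwoSFT Γ ∧ Γ ⊆ S ∧ ∀ a : A, ∃ z ∈ Γ, z 0 = a) ↔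
      ∃ φ : A → A, ∀ a : A, (fun j => φ^[j] a) ∈ S := by
  constructor
  · rintro ⟨Γ, ⟨Fb, hΓ⟩, hsub, hfull⟩
    choose z hz ha using hfull
    have key : ∀ b : A, (b, z b 1) ∉ Fb := by
      intro b
      have h := hz b
      rw [hΓ] at h
      have := h 0
      rwa [ha b] at this
    refine ⟨fun a => z a 1, fun a => hsub ?_⟩
    rw [hΓ]
    intro i
    simp only [Function.iterate_succ_apply', Set.mem_setOf_eq]
    exact key _
  · rintro ⟨φ, hφ⟩
    refine ⟨{z | ∀ i, z (i + 1) = φ (z i)}, ⟨{p | p.2 ≠ φ p.1}, ?_⟩, ?_, ?_⟩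
    · ext w
      simp [Set.mem_setOf_eq, not_not]
    · intro w hw
      have hj : ∀ j, w j = φ^[j] (w 0) := by
        intro j
        induction j with
        | zero => rfl
        | succ n ih => rw [hw n, ih, Function.iterate_succ_apply']
      have : w = fun j => φ^[j] (w 0) := funext hj
      rw [this]
      exact hφ _
    · intro a
      exact ⟨fun j => φ^[j] a, fun i => by simp [Function.iterate_succ_apply'], rfl⟩
end

section
/- Every 2-SFT Σ whose alphabet is all of A (i.e., every letter of A begins some element of Σ) is traceable: there exists a cellular automaton F on A with τ(F) = Σ. -/
variable {A : Type*}

/-- Every 2-SFT whose alphabet is all of `A` is traceable. -/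
theorem stmt2 [Fintype A] [TopologicalSpace A] [DiscreteTopology A]
    (hA : 2 ≤ Fintype.card A) (S : Set (ℕ → A)) (h2 : IsTwoSFT S)
    (hfull : ∀ a : A, ∃ z ∈ S, z 0 = a) :
    Traceable S := by
  classical
  obtain ⟨Fb, hS⟩ := h2
  have hex : ∀ a : A, ∃ b, (a, b) ∉ Fb := by
    intro a
    obtain ⟨z, hz, h0⟩ := hfull a
    rw [hS] at hz
    exact ⟨z 1, by simpa [h0] using hz 0⟩
  choose g hgp using hex
  set f : A → A → A := fun a b => if (a, b) ∈ Fb then g a else b with hf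
  have hfgood : ∀ a b, (a, f a b) ∉ Fb := by
    intro a b
    by_cases h : (a, b) ∈ Fb <;> simp [hf, h, hgp a]
  have hfid : ∀ a b, (a, b) ∉ Fb → f a b = b := by
    intro a b h; simp [hf, h]
  set F : (ℤ → A) → (ℤ → A) := fun x i => f (x i) (x (i + 1)) with hFdef
  have hF : ∀ x i, F x i = f (x i) (x (i + 1)) := fun _ _ => rfl
  refine ⟨F, ⟨?_, ?_⟩, ?_⟩
  · -- continuity
    refine continuous_pi fun i => ?_
    have hcont : Continuous (fun p : A × A => f p.1 p.2) :=
      continuous_of_discreteTopology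
    show Continuous fun x : ℤ → A => f (x i) (x (i + 1))
    have hc2 : Continuous fun x : ℤ → A => (x i, x (i + 1)) :=
      Continuous.prodMk (continuous_apply i) (continuous_apply (i + 1))
    exact hcont.comp hc2
  · intro x; funext i; simp [hF, shiftZ]
  · ext z
    simp only [traceSubshift, Set.mem_range, hS, Set.mem_setOf_eq]
    constructor
    · rintro ⟨x, rfl⟩ i
      have h1 : caTrace F x (i + 1) = f (caTrace F x i) (F^[i] x 1) := by
        simp [caTrace, Function.iterate_succ_apply', hF]
      rw [h1]
      exact hfgood _ _
    · intro hz
      refine ⟨fun i => z i.toNat, ?_⟩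
      have key : ∀ j, ∀ i : ℤ, 0 ≤ i →
          F^[j] (fun i => z i.toNat) i = z (i.toNat + j) := by
        intro j
        induction j with
        | zero => intro i hi; simp
        | succ j ih =>
          intro i hi
          rw [Function.iterate_succ_apply', hF, ih i hi, ih (i + 1) (by omega)]
          have h1 : (i + 1).toNat = i.toNat + 1 := by omega
          rw [h1]
          have h2 : i.toNat + 1 + j = i.toNat + j + 1 := by omega
          rw [h2, hfid _ _ (hz (i.toNat + j))]
          congr 1
      funext j
      have := key j 0 le_rfl
      simpa [caTrace] using this
end

section
/- Every T1 subshift Σ on the alphabet A is k-traceable for some k ∈ ℕ*: there exist k ≥ 1, an alphabet B ⊆ A^k, and a onesided cellular automaton F on B such that Σ = ⋃_{0≤q<k} π_q(τ(F)). -/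
variable {A : Type*}

/-!
A 2-SFT `Γ` is the trace of the onesided radius-1 automaton on the letters occurring in `Γ` whose
local rule keeps the right neighbour `b` of a cell `a` when `ab` is allowed, and otherwise replaces
it by a fixed allowed successor of `a`. Every trace of this automaton is allowed, and on a
configuration that is itself an allowed sequence the automaton is just the shift, so its traces
recover all of `Γ`. Taking for `Γ ⊆ (A^k)^ℕ` the 2-SFT of a T1 presentation, the union of the
projections of the trace subshift is `π(Γ) = Σ`.
-/

namespace TwoSFT

variable {C : Type*} (Fb : Set (C × C))

def allowedSeqs : Set (ℕ → C) := {z | ∀ i, (z i, z (i + 1)) ∉ Fb}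

def letters : Set C := {a | ∃ z ∈ allowedSeqs Fb, ∃ n, z n = a}

theorem exists_allowed_succ (a : letters Fb) : ∃ b : letters Fb, ((a : C), (b : C)) ∉ Fb := by
  obtain ⟨a, z, hz, n, rfl⟩ := a
  exact ⟨⟨z (n + 1), z, hz, n + 1, rfl⟩, hz n⟩

open Classical in
noncomputable def repairRule (a b : letters Fb) : letters Fb :=
  if ((a : C), (b : C)) ∈ Fb then (exists_allowed_succ Fb a).choose else b

theorem repairRule_allowed (a b : letters Fb) : ((a : C), (repairRule Fb a b : C)) ∉ Fb := by
  unfold repairRule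
  split_ifs with h
  · exact (exists_allowed_succ Fb a).choose_spec
  · exact h

theorem repairRule_of_allowed {a b : letters Fb} (h : ((a : C), (b : C)) ∉ Fb) :
    repairRule Fb a b = b := if_neg h

noncomputable def repairCA (x : ℤ → letters Fb) : ℤ → letters Fb :=
  fun i => repairRule Fb (x i) (x (i + 1))

theorem isOnesidedCA_repairCA : IsOnesidedCA (repairCA Fb) :=
  ⟨2, fun g => repairRule Fb (g 0) (g 1), fun x i => by simp [repairCA]⟩

theorem caTrace_repairCA_mem_allowedSeqs (x : ℤ → letters Fb) :
    (fun j => (caTrace (repairCA Fb) x j).1) ∈ allowedSeqs Fb := by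
  intro j
  simp only [caTrace, Function.iterate_succ_apply']
  exact repairRule_allowed Fb _ _

-- The values on negative cells are arbitrary: the onesided rule never reads them from cells `≥ 0`.
def configOfAllowedSeq {z : ℕ → C} (hz : z ∈ allowedSeqs Fb) : ℤ → letters Fb :=
  fun i => ⟨z i.toNat, z, hz, _, rfl⟩

theorem repairCA_iterate_configOfAllowedSeq {z : ℕ → C} (hz : z ∈ allowedSeqs Fb) (j n : ℕ) :
    ((repairCA Fb)^[j] (configOfAllowedSeq Fb hz) n : C) = z (n + j) := by
  induction j generalizing n with
  | zero => simp [configOfAllowedSeq]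
  | succ j ih =>
    have ih' : ((repairCA Fb)^[j] (configOfAllowedSeq Fb hz) ((n : ℤ) + 1) : C)
        = z (n + j + 1) := by
      rw [← Nat.cast_add_one, ih, Nat.add_right_comm]
    have allowed := hz (n + j)
    rw [← ih, ← ih'] at allowed
    rw [Function.iterate_succ_apply', repairCA, repairRule_of_allowed Fb allowed, ih']
    rfl

theorem exists_caTrace_repairCA_eq {z : ℕ → C} (hz : z ∈ allowedSeqs Fb) :
    ∃ x, (fun j => (caTrace (repairCA Fb) x j).1) = z :=
  ⟨configOfAllowedSeq Fb hz, funext fun j => by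
    simpa [caTrace] using repairCA_iterate_configOfAllowedSeq Fb hz j 0⟩

theorem image_coe_traceSubshift_repairCA :
    (fun (t : ℕ → letters Fb) j => (t j : C)) '' traceSubshift (repairCA Fb) = allowedSeqs Fb := by
  apply subset_antisymm
  · rintro _ ⟨_, ⟨x, rfl⟩, rfl⟩
    exact caTrace_repairCA_mem_allowedSeqs Fb x
  · intro z hz
    obtain ⟨x, hx⟩ := exists_caTrace_repairCA_eq Fb hz
    exact ⟨_, ⟨x, rfl⟩, hx⟩

end TwoSFT

open TwoSFT in
theorem stmt3_general (S : Set (ℕ → A)) (hT1 : IsT1 S) :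
    ∃ k : ℕ, 0 < k ∧ KTraceable k S := by
  obtain ⟨k, hk, _, ⟨Fb, rfl⟩, -, hπ⟩ := hT1
  change projAll (allowedSeqs Fb) = S at hπ
  refine ⟨k, hk, letters Fb, repairCA Fb, isOnesidedCA_repairCA Fb, ?_⟩
  rw [← hπ, projAll, ← image_coe_traceSubshift_repairCA Fb]
  simp only [Set.image_image]
  rfl

/-- Every T1 subshift is k-traceable for some `k ≥ 1`. -/
theorem stmt3 [Fintype A] [TopologicalSpace A] [DiscreteTopology A]
    (hA : 2 ≤ Fintype.card A) (S : Set (ℕ → A)) (hS : IsSubshift S) (hT1 : IsT1 S) :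
    ∃ k : ℕ, 0 < k ∧ KTraceable k S :=
  stmt3_general S hT1
end

section
/- A subshift Σ on the alphabet A is T1 if and only if there exist k ∈ ℕ* and a subshift of finite type Γ ⊆ (A^k)^ℕ such that Σ is a factor of Γ and π(Γ) ⊆ Σ. -/
variable {A : Type*}

lemma shiftN_iterate (z : ℕ → A) (t j : ℕ) : (shiftN^[t] z) j = z (j + t) := by
  induction t generalizing z j with
  | zero => rfl
  | succ t ih =>
      rw [Function.iterate_succ_apply, ih]
      rfl

lemma ksft_isClosed {X : Type*} [TopologicalSpace X] [DiscreteTopology X] [Finite X] {m : ℕ}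
    (Fb : Set (Fin m → X)) :
    IsClosed {z : ℕ → X | ∀ i : ℕ, (fun j : Fin m => z (i + (j : ℕ))) ∉ Fb} := by
  have h : {z : ℕ → X | ∀ i : ℕ, (fun j : Fin m => z (i + (j : ℕ))) ∉ Fb}
      = ⋂ i : ℕ, (fun (z : ℕ → X) (j : Fin m) => z (i + (j : ℕ))) ⁻¹' Fbᶜ := by
    ext z; simp [Set.mem_iInter]
  rw [h]
  exact isClosed_iInter fun i =>
    (isClosed_discrete _).preimage (continuous_pi fun j => continuous_apply _)

lemma exists_radius {B C : Type*} [TopologicalSpace B] [TopologicalSpace C] [DiscreteTopology B]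
    [DiscreteTopology C] {Γ : Set (ℕ → B)} (hΓc : IsCompact Γ) {g : (ℕ → B) → C}
    (hg : ContinuousOn g Γ) :
    ∃ r : ℕ, ∀ z ∈ Γ, ∀ z' ∈ Γ, (∀ j < r, z j = z' j) → g z = g z' := by
  have hpt : ∀ z ∈ Γ, ∃ r : ℕ, ∀ z' ∈ Γ, (∀ j < r, z' j = z j) → g z' = g z := by
    intro z hz
    have hmem : g ⁻¹' {g z} ∈ nhdsWithin z Γ :=
      hg z hz (IsOpen.mem_nhds (isOpen_discrete _) rfl)
    rw [mem_nhdsWithin] at hmem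
    obtain ⟨U, hUo, hzU, hUsub⟩ := hmem
    obtain ⟨I, u, hu, hsub⟩ := isOpen_pi_iff.mp hUo z hzU
    refine ⟨(I.sup id) + 1, fun z' hz' hagree => ?_⟩
    have hU : z' ∈ U := hsub fun i hi => by
      rw [hagree i (lt_of_le_of_lt (Finset.le_sup (f := id) hi) (Nat.lt_succ_self _))]
      exact (hu i hi).2
    exact hUsub ⟨hU, hz'⟩
  choose! rfun hrfun using hpt
  have hcyl : ∀ z : ℕ → B, IsOpen {z' : ℕ → B | ∀ j < rfun z, z' j = z j} := by
    intro z
    have h : {z' : ℕ → B | ∀ j < rfun z, z' j = z j}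
        = (fun (z' : ℕ → B) (j : Fin (rfun z)) => z' (j : ℕ)) ⁻¹'
            {fun j : Fin (rfun z) => z (j : ℕ)} := by
      ext z'
      constructor
      · intro h; funext j; exact h j j.isLt
      · intro h j hj
        exact congrFun h ⟨j, hj⟩
    rw [h]
    exact (isOpen_discrete _).preimage (continuous_pi fun j => continuous_apply _)
  obtain ⟨t, htΓ, hcov⟩ := hΓc.elim_nhds_subcover
    (fun z => {z' : ℕ → B | ∀ j < rfun z, z' j = z j})
    (fun z _ => (hcyl z).mem_nhds (fun j hj => rfl))
  refine ⟨t.sup rfun, fun z hz z' hz' hagree => ?_⟩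
  obtain ⟨z₀, hz₀t, hzU⟩ := Set.mem_iUnion₂.mp (hcov hz)
  have h1 : ∀ j < rfun z₀, z j = z₀ j := hzU
  have h2 : ∀ j < rfun z₀, z' j = z₀ j := fun j hj =>
    (hagree j (lt_of_lt_of_le hj (Finset.le_sup hz₀t))).symm.trans (h1 j hj)
  exact (hrfun z₀ (htΓ _ hz₀t) z hz h1).trans (hrfun z₀ (htΓ _ hz₀t) z' hz' h2).symm

def symb {k : ℕ} (L : ℕ) (hk : 0 < k) (φ : (ℕ → (Fin k → A)) → (ℕ → A))
    (z : ℕ → (Fin k → A)) (i : ℕ) : Fin (1 + L * k) → A :=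
  fun c => if _ : (c : ℕ) = 0 then φ z i
    else z (i + ((c : ℕ) - 1) / k) ⟨((c : ℕ) - 1) % k, Nat.mod_lt _ hk⟩

def Ov {K : ℕ} (k : ℕ) (s s' : Fin K → A) : Prop :=
  ∀ c : Fin K, k + 1 ≤ (c : ℕ) →
    s' ⟨(c : ℕ) - k, lt_of_le_of_lt (Nat.sub_le _ _) c.isLt⟩ = s c

lemma symb_decode {k L : ℕ} (hk : 0 < k) (φ : (ℕ → (Fin k → A)) → (ℕ → A))
    (z : ℕ → (Fin k → A)) (i t : ℕ) (q : Fin k) (h : 1 + t * k + (q : ℕ) < 1 + L * k) :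
    symb L hk φ z i ⟨1 + t * k + (q : ℕ), h⟩ = z (i + t) q := by
  have h0 : ¬ (1 + t * k + (q : ℕ) = 0) := by omega
  simp only [symb]
  rw [dif_neg h0]
  have h1 : 1 + t * k + (q : ℕ) - 1 = k * t + (q : ℕ) := by
    have : t * k = k * t := by ring
    omega
  simp only [h1]
  rw [Nat.mul_add_div hk, Nat.div_eq_of_lt q.isLt, Nat.add_zero]
  congr 1
  apply Fin.ext
  simp [Nat.mul_add_mod, Nat.mod_eq_of_lt q.isLt]

lemma symb_ov {k L : ℕ} (hk : 0 < k) (φ : (ℕ → (Fin k → A)) → (ℕ → A))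
    (z : ℕ → (Fin k → A)) (i : ℕ) (c : Fin (1 + L * k)) (hc : k + 1 ≤ (c : ℕ)) :
    symb L hk φ z (i + 1) ⟨(c : ℕ) - k, lt_of_le_of_lt (Nat.sub_le _ _) c.isLt⟩
      = symb L hk φ z i c := by
  obtain ⟨e, he⟩ : ∃ e, (c : ℕ) = e + k + 1 := ⟨(c : ℕ) - k - 1, by omega⟩
  simp only [symb]
  rw [dif_neg (show ¬((c : ℕ) - k = 0) by omega), dif_neg (show ¬((c : ℕ) = 0) by omega)]
  have h2 : (c : ℕ) - k - 1 = e := by omega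
  have h3 : (c : ℕ) - 1 = e + k := by omega
  simp only [h2, h3]
  rw [Nat.add_div_right e hk]
  have h4 : i + 1 + e / k = i + (e / k + 1) := by omega
  rw [h4]
  congr 1
  apply Fin.ext
  simp [Nat.add_mod_right]

/-- A subshift `S` on `A` is T1 iff there are `k ≥ 1` and an SFT
`Γ ⊆ (A^k)^ℕ` such that `S` is a factor of `Γ` and `π(Γ) ⊆ S`. -/
theorem stmt5 [Fintype A] [TopologicalSpace A] [DiscreteTopology A]
    (hA : 2 ≤ Fintype.card A) (S : Set (ℕ → A)) (hS : IsSubshift S) :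
    IsT1 S ↔ ∃ k : ℕ, 0 < k ∧ ∃ Γ : Set (ℕ → (Fin k → A)),
      IsSFT Γ ∧ IsFactorOf S Γ ∧ projAll Γ ⊆ S := by
  constructor
  · rintro ⟨k, hk, Γ, ⟨Fb, hFb⟩, hp0, hpA⟩
    refine ⟨k, hk, Γ, ⟨2, {v : Fin 2 → (Fin k → A) | (v 0, v 1) ∈ Fb}, ?_⟩,
      ⟨proj ⟨0, hk⟩, ?_, hp0, fun z _ => rfl⟩, hpA.subset⟩
    · rw [hFb]; ext z; simp
    · exact (continuous_pi fun j =>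
        (continuous_apply _).comp (continuous_apply j)).continuousOn
  · rintro ⟨k, hk, Γ, ⟨m, Fb, hΓ⟩, ⟨φ, hφc, hφim, hφsh⟩, hproj⟩
    -- shift stability of Γ
    have hstab : ∀ z ∈ Γ, shiftN z ∈ Γ := by
      intro z hz
      rw [hΓ] at hz ⊢
      intro i
      have heq : (fun j : Fin m => shiftN z (i + (j : ℕ)))
          = fun j : Fin m => z ((i + 1) + (j : ℕ)) := by
        funext j
        show z (i + (j : ℕ) + 1) = z (i + 1 + (j : ℕ))
        have h2 : i + (j : ℕ) + 1 = i + 1 + (j : ℕ) := by omega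
        rw [h2]
      rw [heq]
      exact hz (i + 1)
    have hstabI : ∀ t, ∀ z ∈ Γ, shiftN^[t] z ∈ Γ := by
      intro t
      induction t with
      | zero => exact fun z hz => hz
      | succ t ih =>
          intro z hz
          rw [Function.iterate_succ_apply]
          exact ih _ (hstab z hz)
    have hφiter : ∀ i, ∀ z ∈ Γ, φ z i = φ (shiftN^[i] z) 0 := by
      intro i
      induction i with
      | zero => exact fun z _ => rfl
      | succ i ih =>
          intro z hz
          have h1 : φ z (i + 1) = φ (shiftN z) i := (congrFun (hφsh z hz) i).symm
          rw [h1, ih _ (hstab z hz), Function.iterate_succ_apply]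
    -- uniform radius for φ
    have hcl : IsClosed Γ := by rw [hΓ]; exact ksft_isClosed Fb
    have hΓc : IsCompact Γ := hcl.isCompact
    have hg : ContinuousOn (fun z => φ z 0) Γ := (continuous_apply 0).comp_continuousOn hφc
    obtain ⟨r, hr⟩ := exists_radius hΓc hg
    obtain ⟨L, hmL, hrL⟩ : ∃ L, m ≤ L ∧ r ≤ L := ⟨max m r, le_max_left m r, le_max_right m r⟩
    -- the key characterization
    have hchar : {w : ℕ → (Fin (1 + L * k) → A) |
          ∀ i, w i ∈ (fun z => symb L hk φ z 0) '' Γ ∧ Ov k (w i) (w (i + 1))}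
        = (fun z i => symb L hk φ z i) '' Γ := by
      apply Set.Subset.antisymm
      · intro w hw
        choose ζ hζΓ hζw using fun i => (hw i).1
        have hζw' : ∀ i, symb L hk φ (ζ i) 0 = w i := hζw
        set z : ℕ → (Fin k → A) := fun j => ζ j 0 with hzdef
        have hblock : ∀ t, t < L → ∀ i, z (i + t) = ζ i t := by
          intro t
          induction t with
          | zero =>
              intro _ i
              show ζ (i + 0) 0 = ζ i 0
              rw [Nat.add_zero]
          | succ t ih =>
              intro ht i
              have h1 : z (i + (t + 1)) = ζ (i + 1) t := by
                have h2 : i + (t + 1) = (i + 1) + t := by omega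
                rw [h2]
                exact ih (Nat.lt_of_succ_lt ht) (i + 1)
              rw [h1]
              funext q
              have hcb : 1 + (t + 1) * k + (q : ℕ) < 1 + L * k := by
                have hq := q.isLt
                have hmul : (t + 1) * k + (q : ℕ) < L * k := by
                  calc (t + 1) * k + (q : ℕ) < (t + 1) * k + k := by omega
                    _ = (t + 2) * k := by ring
                    _ ≤ L * k := Nat.mul_le_mul_right k (by omega)
                omega
              have hcb2 : 1 + t * k + (q : ℕ) < 1 + L * k := by
                have : t * k ≤ (t + 1) * k := Nat.mul_le_mul_right k (by omega)
                omega
              have hkle : k + 1 ≤ 1 + (t + 1) * k + (q : ℕ) := by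
                have : k ≤ (t + 1) * k := by
                  calc k = 1 * k := (one_mul k).symm
                    _ ≤ (t + 1) * k := Nat.mul_le_mul_right k (by omega)
                omega
              have e1 : ζ i (t + 1) q = w i ⟨1 + (t + 1) * k + (q : ℕ), hcb⟩ := by
                rw [← hζw' i, symb_decode]
                rw [Nat.zero_add]
              have e2 : ζ (i + 1) t q = w (i + 1) ⟨1 + t * k + (q : ℕ), hcb2⟩ := by
                rw [← hζw' (i + 1), symb_decode]
                rw [Nat.zero_add]
              have e3 : w (i + 1) ⟨1 + t * k + (q : ℕ), hcb2⟩
                  = w i ⟨1 + (t + 1) * k + (q : ℕ), hcb⟩ := by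
                have hov := (hw i).2 ⟨1 + (t + 1) * k + (q : ℕ), hcb⟩ hkle
                convert hov using 2
                apply Fin.ext
                show 1 + t * k + (q : ℕ) = 1 + (t + 1) * k + (q : ℕ) - k
                have : (t + 1) * k = t * k + k := by ring
                omega
              exact e2.trans (e3.trans e1.symm)
        have hzΓ : z ∈ Γ := by
          rw [hΓ]
          intro i
          have h := hζΓ i
          rw [hΓ] at h
          have h0 := h 0
          have heq : (fun j : Fin m => z (i + (j : ℕ)))
              = fun j : Fin m => ζ i (0 + (j : ℕ)) := by
            funext j
            rw [Nat.zero_add]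
            exact hblock (j : ℕ) (lt_of_lt_of_le j.isLt hmL) i
          rw [heq]
          exact h0
        have hφz : ∀ i, φ z i = φ (ζ i) 0 := by
          intro i
          rw [hφiter i z hzΓ]
          apply hr (shiftN^[i] z) (hstabI i z hzΓ) (ζ i) (hζΓ i)
          intro j hj
          rw [shiftN_iterate]
          rw [Nat.add_comm j i]
          exact hblock j (lt_of_lt_of_le hj hrL) i
        refine ⟨z, hzΓ, funext fun i => funext fun c => ?_⟩
        show symb L hk φ z i c = w i c
        rw [← hζw' i]
        by_cases hc : (c : ℕ) = 0
        · simp only [symb]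
          rw [dif_pos hc, dif_pos hc]
          exact hφz i
        · simp only [symb]
          rw [dif_neg hc, dif_neg hc]
          rw [Nat.zero_add]
          have hd : ((c : ℕ) - 1) / k < L := by
            have hcl := c.isLt
            rw [Nat.div_lt_iff_lt_mul hk]
            have : L * k = k * L := by ring
            omega
          exact congrFun (hblock _ hd i) _
      · rintro w ⟨z, hz, rfl⟩ i
        constructor
        · refine ⟨shiftN^[i] z, hstabI i z hz, ?_⟩
          funext c
          by_cases hc : (c : ℕ) = 0
          · simp only [symb]
            rw [dif_pos hc, dif_pos hc]
            exact (hφiter i z hz).symm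
          · simp only [symb]
            rw [dif_neg hc, dif_neg hc]
            rw [shiftN_iterate, Nat.zero_add, Nat.add_comm (((c : ℕ) - 1) / k) i]
        · intro c hc
          exact symb_ov hk φ z i c hc
    -- assemble the T1 witness
    have hproj0 : ∀ z : ℕ → (Fin k → A),
        proj (⟨0, by omega⟩ : Fin (1 + L * k)) (fun i => symb L hk φ z i) = φ z := by
      intro z
      funext j
      simp [proj, symb]
    refine ⟨1 + L * k, by omega,
      {w | ∀ i, w i ∈ (fun z => symb L hk φ z 0) '' Γ ∧ Ov k (w i) (w (i + 1))},
      ⟨{p | ¬ (p.1 ∈ (fun z => symb L hk φ z 0) '' Γ ∧ Ov k p.1 p.2)}, by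
        ext w; simp only [Set.mem_setOf_eq, not_not]⟩, ?_, ?_⟩
    · rw [hchar]
      rw [← hφim]
      ext s
      constructor
      · rintro ⟨w, ⟨z, hz, rfl⟩, rfl⟩
        exact ⟨z, hz, (hproj0 z).symm ▸ rfl⟩
      · rintro ⟨z, hz, rfl⟩
        exact ⟨(fun i => symb L hk φ z i), ⟨z, hz, rfl⟩, hproj0 z⟩
    · rw [hchar]
      apply Set.Subset.antisymm
      · intro s hs
        obtain ⟨c, w, ⟨z, hz, rfl⟩, rfl⟩ := by
          simpa only [projAll, Set.mem_iUnion] using hs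
        by_cases hc : (c : ℕ) = 0
        · have hpc : proj c (fun i => symb L hk φ z i) = φ z := by
            funext j
            show symb L hk φ z j c = φ z j
            simp only [symb]
            rw [dif_pos hc]
          rw [hpc, ← hφim]
          exact ⟨z, hz, rfl⟩
        · have hval : proj c (fun i => symb L hk φ z i)
              = proj ⟨((c : ℕ) - 1) % k, Nat.mod_lt _ hk⟩
                  (shiftN^[((c : ℕ) - 1) / k] z) := by
            funext j
            show symb L hk φ z j c = _
            simp only [symb]
            rw [dif_neg hc]
            show _ = (shiftN^[((c : ℕ) - 1) / k] z) j _
            rw [shiftN_iterate, Nat.add_comm j (((c : ℕ) - 1) / k)]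
          rw [hval]
          apply hproj
          exact Set.mem_iUnion.mpr ⟨_, Set.mem_image_of_mem _ (hstabI _ z hz)⟩
      · intro s hs
        rw [← hφim] at hs
        obtain ⟨z, hz, rfl⟩ := hs
        exact Set.mem_iUnion.mpr ⟨⟨0, by omega⟩,
          ⟨(fun i => symb L hk φ z i), ⟨z, hz, rfl⟩, hproj0 z⟩⟩
end

section
/- Let Σ be a sofic transitive subshift on the alphabet A. Then Σ is infinite if and only if for every n ≥ 2 there exist k ∈ ℕ* and a set B ⊆ A^k with |B| ≥ n such that B^ω ⊆ Σ. -/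
variable {A : Type*}

/-!
If `B^ω ⊆ S` for two distinct blocks `x ≠ y`, the points carrying `x` in exactly one block
position are pairwise distinct, so `S` is infinite.

Conversely, a DFA for the regular language `lang S` provides a synchronizing word `w`, i.e.
`uw, wv ∈ lang S → uwv ∈ lang S`. If `S` is infinite and transitive, some extension `q` of `w`
is right special: otherwise all extensions of `w` are forced, and transitivity then makes every
point of `S` periodic with one common period. Transitivity closes `qa` and `qb` (`a ≠ b`) into
loops `u`, `v` at `q`; as `q` is synchronizing, concatenations of loops are loops, and every
infinite concatenation of loops of a common length lies in `S`. The `n` words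
`(uv)^m (vu)^(n-m)`, `m < n`, are distinct loops of a common length.
-/

def window (z : ℕ → A) (i N : ℕ) : List A := List.ofFn fun j : Fin N => z (i + j)

section Language

variable {S : Set (ℕ → A)} {z : ℕ → A} {u v w : List A}

@[simp] lemma length_window (z : ℕ → A) (i N : ℕ) : (window z i N).length = N := by
  simp [window]

lemma window_add (z : ℕ → A) (i m n : ℕ) :
    window z i (m + n) = window z i m ++ window z (i + m) n := by
  simp only [window, List.ofFn_add, Fin.val_castLE, Fin.val_natAdd, add_assoc]

lemma window_mem_lang (hz : z ∈ S) (i N : ℕ) : window z i N ∈ lang S :=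
  ⟨z, hz, i, by rw [length_window]; rfl⟩

lemma exists_eq_window_of_mem_lang (hw : w ∈ lang S) :
    ∃ z ∈ S, ∃ i, w = window z i w.length :=
  hw

lemma List.IsInfix.mem_lang (h : u <:+: v) (hv : v ∈ lang S) : u ∈ lang S := by
  obtain ⟨s, t, rfl⟩ := h
  obtain ⟨z, hz, i, hzi⟩ := exists_eq_window_of_mem_lang hv
  rw [List.length_append, List.length_append, window_add, window_add] at hzi
  obtain ⟨hsu, -⟩ := List.append_inj hzi (by simp)
  rw [(List.append_inj hsu (by simp)).2]
  exact window_mem_lang hz _ _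

lemma exists_append_singleton_mem_lang (hw : w ∈ lang S) : ∃ a, w ++ [a] ∈ lang S := by
  obtain ⟨z, hz, i, hzi⟩ := exists_eq_window_of_mem_lang hw
  refine ⟨z (i + w.length), ?_⟩
  have : window z i (w.length + 1) = w ++ [z (i + w.length)] := by
    rw [window_add, ← hzi]; simp [window]
  exact this ▸ window_mem_lang hz _ _

end Language

lemma iterate_shiftN_apply (z : ℕ → A) (n j : ℕ) : shiftN^[n] z j = z (j + n) := by
  induction n generalizing z with
  | zero => rfl
  | succ n ih => rw [Function.iterate_succ_apply, ih]; simp [shiftN, add_assoc]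

lemma IsSubshift.iterate_shiftN_mem [TopologicalSpace A] {S : Set (ℕ → A)} (hS : IsSubshift S)
    {z : ℕ → A} (hz : z ∈ S) (n : ℕ) : shiftN^[n] z ∈ S := by
  induction n with
  | zero => exact hz
  | succ n ih => rw [Function.iterate_succ_apply']; exact hS.2 _ ih

lemma IsSubshift.mem_of_forall_window_mem_lang [TopologicalSpace A] [DiscreteTopology A]
    {S : Set (ℕ → A)} (hS : IsSubshift S) {z : ℕ → A} (h : ∀ N, window z 0 N ∈ lang S) :
    z ∈ S := by
  have hagree : ∀ N, ∃ y ∈ S, ∀ j < N, y j = z j := by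
    intro N
    obtain ⟨y, hy, i, hyi⟩ := exists_eq_window_of_mem_lang (h N)
    refine ⟨shiftN^[i] y, hS.iterate_shiftN_mem hy i, fun j hj => ?_⟩
    rw [length_window, window, window, List.ofFn_inj] at hyi
    simpa [iterate_shiftN_apply, add_comm] using (congrFun hyi ⟨j, hj⟩).symm
  choose y hyS hy using hagree
  have hlim : Filter.Tendsto y Filter.atTop (nhds z) := tendsto_pi_nhds.2 fun j =>
    tendsto_const_nhds.congr' <| by
      filter_upwards [Filter.eventually_gt_atTop j] with N hN using (hy N j hN).symm
  exact hS.1.mem_of_tendsto hlim (.of_forall hyS)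

section Synchronizing

variable {S : Set (ℕ → A)} {u v w : List A}

def IsSynchronizing (S : Set (ℕ → A)) (w : List A) : Prop :=
  ∀ u v, u ++ w ∈ lang S → w ++ v ∈ lang S → u ++ w ++ v ∈ lang S

lemma IsSynchronizing.append (hw : IsSynchronizing S w) (d : List A) :
    IsSynchronizing S (w ++ d) := by
  intro u v hu hv
  have hu' : u ++ w ∈ lang S := List.IsInfix.mem_lang ⟨[], d, by simp⟩ hu
  simpa using hw u (d ++ v) hu' (by simpa using hv)

/-- A word leading, in a DFA for `lang S`, to a state whose follower set is minimal among the
states reached by words of `lang S` is synchronizing. -/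
lemma exists_isSynchronizing (hsofic : (lang S).IsRegular) (hne : S.Nonempty) :
    ∃ w ∈ lang S, IsSynchronizing S w := by
  obtain ⟨σ, _, M, hM⟩ := hsofic
  have hext : ∀ x v, x ++ v ∈ lang S ↔ M.evalFrom (M.eval x) v ∈ M.accept := by
    intro x v
    rw [← hM, DFA.mem_accepts, DFA.eval, DFA.evalFrom_of_append]
  let follower (s : σ) : Set (List A) := {v | M.evalFrom s v ∈ M.accept}
  obtain ⟨_, ⟨w, hw, rfl⟩, hmin⟩ := Set.toFinite {s | ∃ w ∈ lang S, M.eval w = s}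
    |>.exists_minimalFor follower _ (hne.elim fun z hz => ⟨_, _, window_mem_lang hz 0 0, rfl⟩)
  refine ⟨w, hw, fun u v hu hv => ?_⟩
  have hsub : follower (M.eval (u ++ w)) ⊆ follower (M.eval w) := fun v' hv' =>
    (hext w v').1 <| List.IsInfix.mem_lang ⟨u, [], by simp⟩ ((hext (u ++ w) v').2 hv')
  exact (hext _ v).2 <| hmin ⟨u ++ w, hu, rfl⟩ hsub ((hext w v).1 hv)

end Synchronizing

section RightSpecial

variable {S : Set (ℕ → A)} {u v w x : List A} {ξ : ℕ → A}

def IsRightSpecial (S : Set (ℕ → A)) (w : List A) : Prop :=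
  ∃ a b, a ≠ b ∧ w ++ [a] ∈ lang S ∧ w ++ [b] ∈ lang S

lemma eq_of_isPrefix_of_forall_not_isRightSpecial (hw : ∀ u, w <+: u → ¬IsRightSpecial S u)
    (hu : u ∈ lang S) (hv : v ∈ lang S) (hwu : w <+: u) (hwv : w <+: v)
    (hlen : u.length = v.length) : u = v := by
  induction u using List.reverseRecOn generalizing v with
  | nil => exact (List.length_eq_zero_iff.1 hlen.symm).symm
  | append_singleton u a ih =>
    obtain rfl | ⟨v, b, rfl⟩ := v.eq_nil_or_concat'
    · simp at hlen
    simp only [List.length_append, List.length_singleton, add_left_inj] at hlen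
    by_cases hwlen : w.length = u.length + 1
    · rw [← hwu.eq_of_length (by simpa), ← hwv.eq_of_length (by simp; omega)]
    have hwlen' : w.length ≤ u.length := by have := hwu.length_le; simp at this; omega
    have hwu' : w <+: u := List.prefix_of_prefix_length_le hwu (List.prefix_append u [a]) hwlen'
    have hwv' : w <+: v :=
      List.prefix_of_prefix_length_le hwv (List.prefix_append v [b]) (hlen ▸ hwlen')
    obtain rfl := ih ((List.prefix_append u [a]).isInfix.mem_lang hu)
      ((List.prefix_append v [b]).isInfix.mem_lang hv) hwu' hwv' hlen
    by_cases hab : a = b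
    · rw [hab]
    · exact absurd ⟨a, b, hab, hu, hv⟩ (hw u hwu')

lemma eq_window_of_isPrefix (hw : ∀ u, w <+: u → ¬IsRightSpecial S u)
    (hξ : ∀ i N, window ξ i N ∈ lang S) (hξw : window ξ 0 w.length = w)
    (hu : u ∈ lang S) (hwu : w <+: u) : u = window ξ 0 u.length := by
  refine eq_of_isPrefix_of_forall_not_isRightSpecial hw hu (hξ 0 _) hwu ?_ (by simp)
  rw [← Nat.add_sub_of_le hwu.length_le, window_add, hξw]
  exact List.prefix_append _ _

lemma eq_window_of_append_mem (hw : ∀ u, w <+: u → ¬IsRightSpecial S u)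
    (hξ : ∀ i N, window ξ i N ∈ lang S) (hξw : window ξ 0 w.length = w) {t : List A}
    (hx : w ++ t ++ x ∈ lang S) : x = window ξ (w.length + t.length) x.length := by
  have h := eq_window_of_isPrefix hw hξ hξw hx (by simp [List.append_assoc])
  rw [List.length_append, List.length_append, window_add, zero_add] at h
  exact (List.append_inj h (by simp)).2

lemma exists_periodic_of_forall_not_isRightSpecial (htrans : IsTransitiveSubshift S)
    (hw : ∀ u, w <+: u → ¬IsRightSpecial S u) (hξ : ∀ i N, window ξ i N ∈ lang S)
    (hξw : window ξ 0 w.length = w) (hw0 : w ≠ []) : ∃ p > 0, Function.Periodic ξ p := by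
  have hwL : w ∈ lang S := hξw ▸ hξ 0 _
  obtain ⟨t, ht⟩ := htrans w hwL w hwL
  have hwp : window ξ (w.length + t.length) w.length = w :=
    (eq_window_of_append_mem hw hξ hξw ht).symm
  refine ⟨w.length + t.length, by simp [List.length_pos_iff.2 hw0], fun j => ?_⟩
  have h := eq_window_of_isPrefix hw hξ hξw (hξ (w.length + t.length) (w.length + (j + 1)))
    (by rw [window_add, hwp]; exact List.prefix_append _ _)
  rw [length_window, window, window, List.ofFn_inj] at h
  simpa [add_comm] using congrFun h ⟨j, by omega⟩

lemma periodic_of_forall_not_isRightSpecial (htrans : IsTransitiveSubshift S)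
    (hw : ∀ u, w <+: u → ¬IsRightSpecial S u) (hξ : ∀ i N, window ξ i N ∈ lang S)
    (hξw : window ξ 0 w.length = w) {p : ℕ}
    (hp : Function.Periodic ξ p) {y : ℕ → A} (hy : y ∈ S) : Function.Periodic y p := by
  intro j
  obtain ⟨t, ht⟩ := htrans w (hξw ▸ hξ 0 _) _ (window_mem_lang hy 0 (j + p + 1))
  have h := eq_window_of_append_mem hw hξ hξw ht
  rw [length_window, window, window, List.ofFn_inj] at h
  have hjp := congrFun h ⟨j + p, by omega⟩
  have hj := congrFun h ⟨j, by omega⟩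
  simp only [zero_add] at hjp hj
  rw [hjp, hj, ← add_assoc, hp]

lemma finite_of_forall_not_isRightSpecial [Finite A] (htrans : IsTransitiveSubshift S)
    (hwL : w ∈ lang S) (hw : ∀ u, w <+: u → ¬IsRightSpecial S u) : S.Finite := by
  obtain ⟨a, hwa⟩ := exists_append_singleton_mem_lang hwL
  have hwa' : ∀ u, w ++ [a] <+: u → ¬IsRightSpecial S u := fun u h =>
    hw u ((List.prefix_append w [a]).trans h)
  obtain ⟨z, hz, i, hzi⟩ := exists_eq_window_of_mem_lang hwa
  have hξ : ∀ j N, window (fun j => z (i + j)) j N ∈ lang S := fun j N => by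
    simpa [window, add_assoc] using window_mem_lang hz (i + j) N
  have hξw : window (fun j => z (i + j)) 0 (w ++ [a]).length = w ++ [a] := by
    simpa [window] using hzi.symm
  obtain ⟨p, hp0, hp⟩ :=
    exists_periodic_of_forall_not_isRightSpecial htrans hwa' hξ hξw (by simp)
  refine (Set.finite_range fun f : Fin p → A => fun j => f ⟨j % p, Nat.mod_lt j hp0⟩).subset
    fun y hy => ⟨fun j => y j, funext ?_⟩
  exact (periodic_of_forall_not_isRightSpecial htrans hwa' hξ hξw hp hy).map_mod_nat

lemma exists_isRightSpecial_append [Finite A] (htrans : IsTransitiveSubshift S)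
    (hinf : S.Infinite) (hw : w ∈ lang S) : ∃ u, IsRightSpecial S (w ++ u) := by
  by_contra! h
  refine hinf (finite_of_forall_not_isRightSpecial htrans hw fun u hwu => ?_)
  obtain ⟨t, rfl⟩ := hwu
  exact h t

end RightSpecial

lemma List.exists_ofFn_eq {l : List A} {K : ℕ} (hl : l.length = K) :
    ∃ f : Fin K → A, List.ofFn f = l := by
  subst hl
  exact ⟨l.get, List.ofFn_get l⟩

lemma List.eq_of_flatten_replicate_append_eq {x y r r' : List A} (hlen : x.length = y.length)
    (hxy : x ≠ y) {m m' : ℕ}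
    (h : (List.replicate m x).flatten ++ (y ++ r) = (List.replicate m' x).flatten ++ (y ++ r')) :
    m = m' := by
  induction m generalizing m' with
  | zero =>
    cases m' with
    | zero => rfl
    | succ m' =>
      simp only [List.replicate_succ, List.replicate_zero, List.flatten_cons, List.flatten_nil,
        List.nil_append, List.append_assoc] at h
      exact absurd (List.append_inj h hlen.symm).1.symm hxy
  | succ m ih =>
    cases m' with
    | zero =>
      simp only [List.replicate_succ, List.replicate_zero, List.flatten_cons, List.flatten_nil,
        List.nil_append, List.append_assoc] at h
      exact absurd (List.append_inj h hlen).1 hxy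
    | succ m' =>
      simp only [List.replicate_succ, List.flatten_cons, List.append_assoc,
        List.append_cancel_left_eq] at h
      rw [ih (by simpa [List.append_assoc] using h)]

section Loops

variable {S : Set (ℕ → A)} {q u v x y : List A}

/-- Thinking of the synchronizing word `q` as a state of a presentation of `S`, the loops at `q`
are the labels of the cycles through that state. -/
def IsLoop (S : Set (ℕ → A)) (q u : List A) : Prop := q <+: u ∧ u ++ q ∈ lang S

lemma IsLoop.append (hq : IsSynchronizing S q) (hu : IsLoop S q u) (hv : IsLoop S q v) :
    IsLoop S q (u ++ v) := by
  obtain ⟨v', rfl⟩ := hv.1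
  refine ⟨hu.1.trans (List.prefix_append _ _), ?_⟩
  simpa [List.append_assoc] using hq u (v' ++ q) hu.2 (by simpa [List.append_assoc] using hv.2)

lemma IsLoop.flatten (hq : IsSynchronizing S q) :
    ∀ {us : List (List A)}, us ≠ [] → (∀ u ∈ us, IsLoop S q u) → IsLoop S q us.flatten
  | [u], _, h => by simpa using h u (by simp)
  | u :: v :: us, _, h => by
    rw [List.flatten_cons]
    exact (h u (by simp)).append hq <|
      IsLoop.flatten hq (List.cons_ne_nil v us) fun w hw => h w (List.mem_cons_of_mem u hw)

lemma IsSubshift.mem_of_forall_isLoop_window [TopologicalSpace A] [DiscreteTopology A]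
    (hS : IsSubshift S) (hq : IsSynchronizing S q) {k : ℕ} (hk : 0 < k) {z : ℕ → A}
    (hz : ∀ i, IsLoop S q (window z (i * k) k)) : z ∈ S := by
  have hloop : ∀ N, IsLoop S q (window z 0 ((N + 1) * k)) := by
    intro N
    induction N with
    | zero => simpa using hz 0
    | succ N ih =>
      rw [add_mul (N + 1) 1 k, one_mul, window_add]
      exact ih.append hq (by simpa using hz (N + 1))
  refine hS.mem_of_forall_window_mem_lang fun N => List.IsInfix.mem_lang ?_ (hloop N).2
  rw [← Nat.add_sub_of_le (show N ≤ (N + 1) * k by nlinarith), window_add, List.append_assoc]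
  exact (List.prefix_append _ _).isInfix

lemma Bomega_subset_of_forall_isLoop [TopologicalSpace A] [DiscreteTopology A]
    (hS : IsSubshift S) (hq : IsSynchronizing S q) {k : ℕ} (hk : 0 < k) {B : Set (Fin k → A)}
    (hB : ∀ x ∈ B, IsLoop S q (List.ofFn x)) : Bomega B ⊆ S :=
  fun _ hz => hS.mem_of_forall_isLoop_window hq hk fun i => hB _ (hz i)

lemma exists_isLoop_pair (htrans : IsTransitiveSubshift S) (hq : IsSynchronizing S q)
    (hrs : IsRightSpecial S q) :
    ∃ x y, IsLoop S q x ∧ IsLoop S q y ∧ x.length = y.length ∧ x ≠ y := by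
  obtain ⟨a, b, hab, ha, hb⟩ := hrs
  have hqL : q ∈ lang S := (List.prefix_append q [a]).isInfix.mem_lang ha
  have loop_of {c : A} (hc : q ++ [c] ∈ lang S) : ∃ s, IsLoop S q (q ++ c :: s) := by
    obtain ⟨s, hs⟩ := htrans _ hc q hqL
    exact ⟨s, List.prefix_append _ _, by simpa using hs⟩
  obtain ⟨s, hs⟩ := loop_of ha
  obtain ⟨t, ht⟩ := loop_of hb
  refine ⟨_, _, hs.append hq ht, ht.append hq hs, by simp; omega, fun h => hab ?_⟩
  exact (by simpa using h : a = b ∧ _).1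

lemma exists_injective_isLoop (hq : IsSynchronizing S q) (hx : IsLoop S q x)
    (hy : IsLoop S q y) (hlen : x.length = y.length) (hxy : x ≠ y) (n : ℕ) :
    ∃ g : Fin n → List A, Function.Injective g ∧
      ∀ m, IsLoop S q (g m) ∧ (g m).length = n * x.length := by
  have hsplit (m : Fin n) : (List.replicate m x ++ List.replicate (n - m) y).flatten =
      (List.replicate m x).flatten ++ (y ++ (List.replicate (n - m - 1) y).flatten) := by
    rw [show n - m = n - m - 1 + 1 by omega, List.replicate_succ, List.flatten_append,
      List.flatten_cons, Nat.add_sub_cancel]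
  refine ⟨fun m => (List.replicate m x ++ List.replicate (n - m) y).flatten,
    fun m m' h => Fin.ext ?_, fun m => ⟨?_, ?_⟩⟩
  · simp only [hsplit] at h
    exact List.eq_of_flatten_replicate_append_eq hlen hxy h
  · refine IsLoop.flatten hq (by simp; omega) fun u hu => ?_
    simp only [List.mem_append, List.mem_replicate] at hu
    rcases hu with ⟨-, rfl⟩ | ⟨-, rfl⟩
    exacts [hx, hy]
  · simp [← hlen, ← add_mul, Nat.add_sub_cancel' m.isLt.le]

lemma exists_ncard_le_Bomega_subset [TopologicalSpace A] [DiscreteTopology A]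
    (hS : IsSubshift S) (hq : IsSynchronizing S q) (hx : IsLoop S q x) (hy : IsLoop S q y)
    (hlen : x.length = y.length) (hxy : x ≠ y) {n : ℕ} (hn : 0 < n) :
    ∃ k, 0 < k ∧ ∃ B : Set (Fin k → A), n ≤ B.ncard ∧ Bomega B ⊆ S := by
  obtain ⟨g, hg, hgloop⟩ := exists_injective_isLoop hq hx hy hlen hxy n
  have hx0 : 0 < x.length := List.length_pos_iff.2 fun hx0 =>
    hxy (hx0.trans (List.length_eq_zero_iff.1 (by rw [← hlen, hx0, List.length_nil])).symm)
  refine ⟨n * x.length, by positivity, List.ofFn ⁻¹' Set.range g, ?_, ?_⟩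
  · rw [Set.ncard_preimage_of_injective_subset_range List.ofFn_injective,
      Set.ncard_range_of_injective hg, Nat.card_eq_fintype_card, Fintype.card_fin]
    rintro _ ⟨m, rfl⟩
    exact List.exists_ofFn_eq (hgloop m).2
  · refine Bomega_subset_of_forall_isLoop hS hq (by positivity) ?_
    rintro _ ⟨m, hm⟩
    exact hm ▸ (hgloop m).1

end Loops

lemma Bomega_infinite {k : ℕ} (hk : 0 < k) {B : Set (Fin k → A)} (hB : B.Nontrivial) :
    (Bomega B).Infinite := by
  obtain ⟨x, hx, y, hy, hxy⟩ := hB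
  let f (n : ℕ) : ℕ → A := fun j => (if j / k = n then x else y) ⟨j % k, Nat.mod_lt j hk⟩
  have hblock (n i : ℕ) : (fun r : Fin k => f n (i * k + r)) = if i = n then x else y := by
    funext r
    have hdiv : (i * k + r) / k = i := by
      rw [add_comm, Nat.add_mul_div_right _ _ hk, Nat.div_eq_of_lt r.isLt, zero_add]
    have hmod : (i * k + r) % k = r := by
      rw [add_comm, Nat.add_mul_mod_self_right, Nat.mod_eq_of_lt r.isLt]
    simp only [f, hdiv, hmod]
  refine Set.infinite_of_injective_forall_mem (f := f) (fun n n' h => ?_) fun n i => ?_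
  · by_contra hne
    have h' := congrArg (fun z : ℕ → A => fun r : Fin k => z (n * k + r)) h
    simp only [hblock, if_true, if_neg hne] at h'
    exact hxy h'
  · show (fun r : Fin k => f n (i * k + r)) ∈ B
    rw [hblock]
    split_ifs
    exacts [hx, hy]

theorem stmt7_general [Fintype A] [TopologicalSpace A] [DiscreteTopology A]
    (S : Set (ℕ → A)) (hS : IsSubshift S)
    (hsofic : (lang S).IsRegular) (htrans : IsTransitiveSubshift S) :
    S.Infinite ↔ ∀ n : ℕ, 2 ≤ n →
      ∃ k : ℕ, 0 < k ∧ ∃ B : Set (Fin k → A), n ≤ B.ncard ∧ Bomega B ⊆ S := by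
  refine ⟨fun hinf n hn => ?_, fun h => ?_⟩
  · obtain ⟨w, hwL, hw⟩ := exists_isSynchronizing hsofic hinf.nonempty
    obtain ⟨u, hu⟩ := exists_isRightSpecial_append htrans hinf hwL
    obtain ⟨x, y, hx, hy, hlen, hxy⟩ := exists_isLoop_pair htrans (hw.append u) hu
    exact exists_ncard_le_Bomega_subset hS (hw.append u) hx hy hlen hxy (by omega)
  · obtain ⟨k, hk, B, hB, hBS⟩ := h 2 le_rfl
    exact (Bomega_infinite hk (Set.one_lt_ncard_iff_nontrivial.1 hB)).mono hBS

/-- A sofic transitive subshift `S` is infinite iff for every `n ≥ 2`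
there are `k ≥ 1` and `B ⊆ A^k` with `|B| ≥ n` and `B^ω ⊆ S`. -/
theorem stmt7 [Fintype A] [TopologicalSpace A] [DiscreteTopology A]
    (hA : 2 ≤ Fintype.card A) (S : Set (ℕ → A)) (hS : IsSubshift S)
    (hsofic : (lang S).IsRegular) (htrans : IsTransitiveSubshift S) :
    S.Infinite ↔ ∀ n : ℕ, 2 ≤ n →
      ∃ k : ℕ, 0 < k ∧ ∃ B : Set (Fin k → A), n ≤ B.ncard ∧ Bomega B ⊆ S :=
  stmt7_general S hS hsofic htrans
end

section
/- Let n ∈ ℕ* and B ⊆ A^n with |B| ≥ 2. Then there exists an injection H : {0, …, 2n−1} → A^{3n} such that every projection of the subshift Γ = {(H((q+j) mod 2n))_{j∈ℕ} : q ∈ {0,…,2n−1}} ⊆ (A^{3n})^ℕ lies in the shift orbit of B^ω; i.e., π(Γ) ⊆ ⋃_{q∈ℕ} σ^q(B^ω). (Explicitly, one may take H(h) = γ^h(u)·γ^h(uv) for two words u, v ∈ B with u_0 ≠ v_0, where γ denotes cyclic rotation of a word by one position.) -/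
variable {A : Type*}

section ClockAux

private lemma shiftN_iter {A : Type*} (m : ℕ) (z : ℕ → A) (j : ℕ) :
    shiftN^[m] z j = z (j + m) := by
  induction m generalizing z j with
  | zero => rfl
  | succ m ih =>
      rw [Function.iterate_succ_apply, ih]
      rfl

private lemma period_mul {A : Type*} {z : ℕ → A} {t : ℕ} (h : ∀ j, z (j + t) = z j)
    (k : ℕ) : ∀ j, z (j + t * k) = z j := by
  induction k with
  | zero => simp
  | succ k ih =>
      intro j
      have e : j + t * (k + 1) = (j + t * k) + t := by ring
      rw [e, h, ih]

private lemma period_gcd {A : Type*} (z : ℕ → A) :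
    ∀ d L : ℕ, (∀ j, z (j + d) = z j) → (∀ j, z (j + L) = z j) →
      ∀ j, z (j + Nat.gcd d L) = z j := by
  intro d
  induction d using Nat.strong_induction_on with
  | _ d ih =>
    intro L hd hL
    rcases Nat.eq_zero_or_pos d with h0 | hpos
    · subst h0; simpa using hL
    · have hmod : ∀ j, z (j + L % d) = z j := by
        intro j
        have h1 : z (j + L % d + d * (L / d)) = z (j + L % d) := period_mul hd _ _
        have h2 : j + L % d + d * (L / d) = j + L := by
          have := Nat.mod_add_div L d; omega
        rw [← h1, h2, hL]
      rw [Nat.gcd_rec]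
      exact ih (L % d) (Nat.mod_lt _ hpos) d hmod hd

private lemma period_mod {A : Type*} {z : ℕ → A} {t : ℕ} (ht : 0 < t)
    (h : ∀ j, z (j + t) = z j) (a b : ℕ) : z (a + b % t) = z (a + b) := by
  have h2 : a + b = (a + b % t) + t * (b / t) := by
    have := Nat.mod_add_div b t; omega
  rw [h2, period_mul h]

variable {A : Type*} {n : ℕ}

private def Uf (hn : 0 < n) (u : Fin n → A) : ℕ → A :=
  fun i => u ⟨i % n, Nat.mod_lt _ hn⟩

private def Wf (hn : 0 < n) (u v : Fin n → A) : ℕ → A := fun i =>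
  if h : i % (2 * n) < n then u ⟨i % (2 * n), h⟩
  else v ⟨i % (2 * n) - n, by have := Nat.mod_lt i (by omega : 0 < 2 * n); omega⟩

private def Hf (hn : 0 < n) (u v : Fin n → A) : Fin (2 * n) → Fin (3 * n) → A :=
  fun h p =>
    if hp : (p : ℕ) < n then Uf hn u ((p : ℕ) + (h : ℕ))
    else Wf hn u v ((p : ℕ) - n + (h : ℕ))

variable (hn : 0 < n) (u v : Fin n → A)

private lemma Uf_period : ∀ j, Uf hn u (j + n) = Uf hn u j := by
  intro j
  show u _ = u _
  congr 1
  exact Fin.ext (by simp [Nat.add_mod_right])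

private lemma Wf_period : ∀ j, Wf hn u v (j + 2 * n) = Wf hn u v j := by
  intro j
  have hmod : (j + 2 * n) % (2 * n) = j % (2 * n) := Nat.add_mod_right _ _
  simp only [Wf, hmod]

private lemma Uf_lt (i : ℕ) (h : i < n) : Uf hn u i = u ⟨i, h⟩ := by
  show u _ = u _
  congr 1
  exact Fin.ext (Nat.mod_eq_of_lt h)

private lemma Wf_lt (i : ℕ) (h : i < n) : Wf hn u v i = u ⟨i, h⟩ := by
  have hmod : i % (2 * n) = i := Nat.mod_eq_of_lt (by omega)
  simp only [Wf, hmod, dif_pos h]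

private lemma Wf_ge (i : ℕ) (h : i < n) : Wf hn u v (n + i) = v ⟨i, h⟩ := by
  have hmod : (n + i) % (2 * n) = n + i := Nat.mod_eq_of_lt (by omega)
  have hni : ¬ (n + i < n) := by omega
  simp only [Wf, hmod, dif_neg hni]
  congr 1
  exact Fin.ext (by simp)

private lemma Wf_eq_Uf (i : ℕ) (h : i < n) : Wf hn u v i = Uf hn u i := by
  rw [Wf_lt hn u v i h, Uf_lt hn u i h]

private lemma Uf_mem {B : Set (Fin n → A)} (hu : u ∈ B) : Uf hn u ∈ Bomega B := by
  intro i
  have : (fun q : Fin n => Uf hn u (i * n + (q : ℕ))) = u := by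
    funext q
    show u _ = u _
    congr 1
    refine Fin.ext ?_
    show (i * n + (q : ℕ)) % n = (q : ℕ)
    rw [show i * n + (q : ℕ) = (q : ℕ) + i * n by ring, Nat.add_mul_mod_self_right,
      Nat.mod_eq_of_lt q.isLt]
  rw [this]; exact hu

private lemma Wf_mem {B : Set (Fin n → A)} (hu : u ∈ B) (hv : v ∈ B) :
    Wf hn u v ∈ Bomega B := by
  intro i
  rcases Nat.even_or_odd i with ⟨t, ht⟩ | ⟨t, ht⟩
  · have : (fun q : Fin n => Wf hn u v (i * n + (q : ℕ))) = u := by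
      funext q
      have e : i * n + (q : ℕ) = (q : ℕ) + (2 * n) * t := by subst ht; ring
      rw [e, period_mul (Wf_period hn u v) t, Wf_lt hn u v _ q.isLt]
    rw [this]; exact hu
  · have : (fun q : Fin n => Wf hn u v (i * n + (q : ℕ))) = v := by
      funext q
      have e : i * n + (q : ℕ) = (n + (q : ℕ)) + (2 * n) * t := by subst ht; ring
      rw [e, period_mul (Wf_period hn u v) t, Wf_ge hn u v _ q.isLt]
    rw [this]; exact hv

end ClockAux

section ClockAux2
variable {A : Type*} {n : ℕ} (hn : 0 < n) (u v : Fin n → A)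

private lemma Hf_lt (h : Fin (2 * n)) (p : Fin (3 * n)) (hp : (p : ℕ) < n) :
    Hf hn u v h p = Uf hn u ((p : ℕ) + (h : ℕ)) := dif_pos hp

private lemma Hf_ge (h : Fin (2 * n)) (p : Fin (3 * n)) (hp : ¬ (p : ℕ) < n) :
    Hf hn u v h p = Wf hn u v ((p : ℕ) - n + (h : ℕ)) := dif_neg hp

end ClockAux2

/-- Clock lemma. For `B ⊆ A^n` with `|B| ≥ 2` there is an injection
`H : [0, 2n) → A^{3n}` such that every projection of the subshift
`Γ = {(H((q+j) mod 2n))_{j∈ℕ}}` lies in the shift orbit of `B^ω`. -/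
theorem stmt11 [Fintype A] (hA : 2 ≤ Fintype.card A) (n : ℕ) (hn : 0 < n)
    (B : Set (Fin n → A)) (hB : 2 ≤ B.ncard) :
    ∃ H : Fin (2 * n) → (Fin (3 * n) → A), Function.Injective H ∧
      ∀ q : Fin (2 * n), ∀ p : Fin (3 * n),
        (fun j : ℕ => H ⟨((q : ℕ) + j) % (2 * n), Nat.mod_lt _ (by omega)⟩ p)
          ∈ ⋃ m : ℕ, shiftN^[m] '' Bomega B := by
  obtain ⟨u, v, hu, hv, huv⟩ : ∃ a b, a ∈ B ∧ b ∈ B ∧ a ≠ b :=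
    (Set.one_lt_ncard_iff B.toFinite).1 (by omega)
  refine ⟨Hf hn u v, ?_, ?_⟩
  · -- Injectivity
    have key : ∀ a b : Fin (2 * n), Hf hn u v a = Hf hn u v b → (a : ℕ) ≤ (b : ℕ) →
        (a : ℕ) = (b : ℕ) := by
      intro a b hab hle
      have hUe : ∀ i : ℕ, Uf hn u (i + (a : ℕ)) = Uf hn u (i + (b : ℕ)) := by
        have hsmall : ∀ i : ℕ, i < n → Uf hn u (i + (a : ℕ)) = Uf hn u (i + (b : ℕ)) := by
          intro i hi
          have h3 : i < 3 * n := by omega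
          have h := congrFun hab ⟨i, h3⟩
          rw [Hf_lt hn u v a ⟨i, h3⟩ hi, Hf_lt hn u v b ⟨i, h3⟩ hi] at h
          exact h
        intro i
        have hi : i % n < n := Nat.mod_lt _ hn
        have e1 : i + (a : ℕ) = (i % n + (a : ℕ)) + n * (i / n) := by
          have := Nat.mod_add_div i n; omega
        have e2 : i + (b : ℕ) = (i % n + (b : ℕ)) + n * (i / n) := by
          have := Nat.mod_add_div i n; omega
        rw [e1, e2, period_mul (Uf_period hn u) (i / n), period_mul (Uf_period hn u) (i / n),
          hsmall _ hi]
      have hWe : ∀ i : ℕ, Wf hn u v (i + (a : ℕ)) = Wf hn u v (i + (b : ℕ)) := by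
        have hsmall : ∀ i : ℕ, i < 2 * n →
            Wf hn u v (i + (a : ℕ)) = Wf hn u v (i + (b : ℕ)) := by
          intro i hi
          have h3 : n + i < 3 * n := by omega
          have hni : ¬ (((⟨n + i, h3⟩ : Fin (3 * n)) : ℕ) < n) := by
            show ¬ (n + i < n); omega
          have h := congrFun hab ⟨n + i, h3⟩
          rw [Hf_ge hn u v a ⟨n + i, h3⟩ hni, Hf_ge hn u v b ⟨n + i, h3⟩ hni] at h
          have e1 : ((⟨n + i, h3⟩ : Fin (3 * n)) : ℕ) - n + (a : ℕ) = i + (a : ℕ) := by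
            show n + i - n + (a : ℕ) = i + (a : ℕ); omega
          have e2 : ((⟨n + i, h3⟩ : Fin (3 * n)) : ℕ) - n + (b : ℕ) = i + (b : ℕ) := by
            show n + i - n + (b : ℕ) = i + (b : ℕ); omega
          rw [e1, e2] at h
          exact h
        intro i
        have hi : i % (2 * n) < 2 * n := Nat.mod_lt _ (by omega)
        have e1 : i + (a : ℕ) = (i % (2 * n) + (a : ℕ)) + (2 * n) * (i / (2 * n)) := by
          have := Nat.mod_add_div i (2 * n); omega
        have e2 : i + (b : ℕ) = (i % (2 * n) + (b : ℕ)) + (2 * n) * (i / (2 * n)) := by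
          have := Nat.mod_add_div i (2 * n); omega
        rw [e1, e2, period_mul (Wf_period hn u v) _, period_mul (Wf_period hn u v) _,
          hsmall _ hi]
      rcases Nat.eq_or_lt_of_le hle with he | hlt
      · exact he
      exfalso
      set δ := (b : ℕ) - (a : ℕ) with hδ
      have hδpos : 0 < δ := by omega
      have hδlt : δ < 2 * n := by have := b.isLt; omega
      have hUδ : ∀ j, Uf hn u (j + δ) = Uf hn u j := by
        intro j
        have hle' : (a : ℕ) ≤ n * (a : ℕ) := Nat.le_mul_of_pos_left _ hn
        have e1 : j + δ + n * (a : ℕ) = (j + n * (a : ℕ) - (a : ℕ)) + (b : ℕ) := by omega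
        have e2 : j + n * (a : ℕ) = (j + n * (a : ℕ) - (a : ℕ)) + (a : ℕ) := by omega
        calc Uf hn u (j + δ)
            = Uf hn u (j + δ + n * (a : ℕ)) := (period_mul (Uf_period hn u) _ _).symm
          _ = Uf hn u ((j + n * (a : ℕ) - (a : ℕ)) + (b : ℕ)) := by rw [e1]
          _ = Uf hn u ((j + n * (a : ℕ) - (a : ℕ)) + (a : ℕ)) := (hUe _).symm
          _ = Uf hn u (j + n * (a : ℕ)) := by rw [← e2]
          _ = Uf hn u j := period_mul (Uf_period hn u) _ _
      have hWδ : ∀ j, Wf hn u v (j + δ) = Wf hn u v j := by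
        intro j
        have hle' : (a : ℕ) ≤ 2 * n * (a : ℕ) := Nat.le_mul_of_pos_left _ (by omega)
        have e1 : j + δ + 2 * n * (a : ℕ) = (j + 2 * n * (a : ℕ) - (a : ℕ)) + (b : ℕ) := by
          omega
        have e2 : j + 2 * n * (a : ℕ) = (j + 2 * n * (a : ℕ) - (a : ℕ)) + (a : ℕ) := by omega
        calc Wf hn u v (j + δ)
            = Wf hn u v (j + δ + 2 * n * (a : ℕ)) := (period_mul (Wf_period hn u v) _ _).symm
          _ = Wf hn u v ((j + 2 * n * (a : ℕ) - (a : ℕ)) + (b : ℕ)) := by rw [e1]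
          _ = Wf hn u v ((j + 2 * n * (a : ℕ) - (a : ℕ)) + (a : ℕ)) := (hWe _).symm
          _ = Wf hn u v (j + 2 * n * (a : ℕ)) := by rw [← e2]
          _ = Wf hn u v j := period_mul (Wf_period hn u v) _ _
      set g := Nat.gcd δ n with hg
      set g' := Nat.gcd δ (2 * n) with hg'
      have hUg : ∀ j, Uf hn u (j + g) = Uf hn u j :=
        period_gcd _ δ n hUδ (Uf_period hn u)
      have hWg' : ∀ j, Wf hn u v (j + g') = Wf hn u v j :=
        period_gcd _ δ (2 * n) hWδ (Wf_period hn u v)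
      have hgpos : 0 < g := Nat.gcd_pos_of_pos_right _ hn
      obtain ⟨r, hr⟩ : ∃ r : Fin n, u r ≠ v r := Function.ne_iff.1 huv
      have hne : Wf hn u v (r : ℕ) ≠ Wf hn u v (n + (r : ℕ)) := by
        rw [Wf_lt hn u v _ r.isLt, Wf_ge hn u v _ r.isLt]
        simpa using hr
      by_cases hdvd : g' ∣ n
      · obtain ⟨k, hk⟩ := hdvd
        have hp : Wf hn u v ((r : ℕ) + n) = Wf hn u v (r : ℕ) := by
          have h10 := period_mul hWg' k (r : ℕ)
          rwa [← hk] at h10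
        exact hne (by rw [Nat.add_comm n (r : ℕ)]; exact hp.symm)
      · have hgg' : g ∣ g' :=
          Nat.dvd_gcd (Nat.gcd_dvd_left δ n) ((Nat.gcd_dvd_right δ n).trans ⟨2, by ring⟩)
        have hg'2g : g' ∣ 2 * g := by
          have h1 : g' ∣ 2 * δ := (Nat.gcd_dvd_left δ (2 * n)).trans ⟨2, by ring⟩
          have h2 : g' ∣ 2 * n := Nat.gcd_dvd_right _ _
          have h3 : g' ∣ Nat.gcd (2 * δ) (2 * n) := Nat.dvd_gcd h1 h2
          rwa [Nat.gcd_mul_left, ← hg] at h3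
        obtain ⟨c, hc⟩ := hgg'
        have hc2 : c ∣ 2 := by
          have h4 : g * c ∣ g * 2 := by
            rw [← hc, show g * 2 = 2 * g by ring]; exact hg'2g
          exact (mul_dvd_mul_iff_left (show g ≠ 0 by omega)).1 h4
        rcases Nat.prime_two.eq_one_or_self_of_dvd c hc2 with hc1 | hc1
        · exact hdvd (by rw [hc, hc1, mul_one, hg]; exact Nat.gcd_dvd_right δ n)
        · have hg2 : g' = 2 * g := by rw [hc, hc1]; ring
          obtain ⟨m, hm⟩ : g ∣ n := by rw [hg]; exact Nat.gcd_dvd_right δ n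
          have hmodd : ¬ 2 ∣ m := by
            rintro ⟨t, ht⟩
            exact hdvd (by rw [hg2, hm, ht]; exact ⟨t, by ring⟩)
          have hm1 : m ≠ 1 := by
            rintro rfl
            have h5 : g' ∣ δ := Nat.gcd_dvd_left _ _
            have h6 : g' ≤ δ := Nat.le_of_dvd hδpos h5
            omega
          have hm3 : 3 ≤ m := by omega
          have h3g : 3 * g ≤ n := by
            calc 3 * g = g * 3 := by ring
              _ ≤ g * m := Nat.mul_le_mul_left g hm3
              _ = n := hm.symm
          have hkey : ∀ s, s < g → Wf hn u v (s + g) = Wf hn u v s := by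
            intro s hs
            rw [Wf_eq_Uf hn u v _ (by omega), Wf_eq_Uf hn u v _ (by omega), hUg s]
          have hper2g : ∀ i, Wf hn u v (i + 2 * g) = Wf hn u v i := by
            intro i; rw [← hg2]; exact hWg' i
          have hWg : ∀ j, Wf hn u v (j + g) = Wf hn u v j := by
            intro j
            have hslt : j % (2 * g) < 2 * g := Nat.mod_lt _ (by omega)
            set s := j % (2 * g) with hs
            have hjs : j = s + (2 * g) * (j / (2 * g)) := by
              have := Nat.mod_add_div j (2 * g); omega
            have e1 : j + g = (s + g) + (2 * g) * (j / (2 * g)) := by omega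
            rw [e1, period_mul hper2g, hjs, period_mul hper2g]
            by_cases hsg : s < g
            · exact hkey s hsg
            · have e2 : s + g = (s - g) + 2 * g := by omega
              rw [e2, hper2g]
              have h7 := hkey (s - g) (by omega)
              rw [show s - g + g = s by omega] at h7
              exact h7.symm
          refine hne ?_
          have h8 : Wf hn u v ((r : ℕ) + n) = Wf hn u v (r : ℕ) := by
            have h10 := period_mul hWg m (r : ℕ)
            rwa [← hm] at h10
          rw [Nat.add_comm n (r : ℕ)]; exact h8.symm
    intro a b hab
    rcases le_total (a : ℕ) (b : ℕ) with h | h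
    · exact Fin.ext (key a b hab h)
    · exact Fin.ext ((key b a hab.symm h).symm)
  · -- Membership
    intro q p
    by_cases hp : (p : ℕ) < n
    · refine Set.mem_iUnion.2 ⟨(p : ℕ) + (q : ℕ), ⟨Uf hn u, Uf_mem hn u hu, ?_⟩⟩
      funext j
      rw [shiftN_iter]
      rw [Hf_lt hn u v _ p hp]
      show Uf hn u (j + ((p : ℕ) + (q : ℕ))) = Uf hn u ((p : ℕ) + ((q : ℕ) + j) % (2 * n))
      have hU2 : ∀ i, Uf hn u (i + 2 * n) = Uf hn u i := by
        intro i
        have h9 := period_mul (Uf_period hn u) 2 i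
        rwa [show n * 2 = 2 * n by ring] at h9
      rw [period_mod (by omega : (0:ℕ) < 2 * n) hU2 (p : ℕ) ((q : ℕ) + j)]
      congr 1
      omega
    · refine Set.mem_iUnion.2 ⟨(p : ℕ) - n + (q : ℕ), ⟨Wf hn u v, Wf_mem hn u v hu hv, ?_⟩⟩
      funext j
      rw [shiftN_iter]
      rw [Hf_ge hn u v _ p hp]
      show Wf hn u v (j + ((p : ℕ) - n + (q : ℕ)))
          = Wf hn u v ((p : ℕ) - n + ((q : ℕ) + j) % (2 * n))
      rw [period_mod (by omega : (0:ℕ) < 2 * n) (Wf_period hn u v) ((p : ℕ) - n)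
        ((q : ℕ) + j)]
      congr 1
      omega
end

section
/- On the alphabet A = {0,1}, the subshift Σ = {0^ω, (01)^ω, (10)^ω} is not traceable: there is no cellular automaton F on {0,1} with τ(F) = Σ (even though Σ is T1). -/
/-! In a space-time diagram every column is a trace, so if all traces of a CA `F` lie in
`{0^ω, (01)^ω, (10)^ω}` then `F` is an involution and `F x` has no `1` where `x` has one. On the
finite set of `n`-periodic configurations such an involution preserves the total number of ones,
as complementation does, while lying pointwise below complementation; hence `F` complements every
periodic configuration. But a configuration `x` with trace `0^ω` has `x₀ = (F x)₀ = 0`, and by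
continuity so does a periodic configuration agreeing with `x` on a large enough window.

For T1, take the 2-SFT over `{0,1}²` whose letters are `(w_j, w_{j+1})` up to swapping the two
coordinates, with the letter `11` forbidden. -/

variable {A : Type*}

/-- `0^ω` over `{0,1}`. -/
def zZero : ℕ → Fin 2 := fun _ => 0
/-- `(01)^ω` over `{0,1}`. -/
def zZeroOne : ℕ → Fin 2 := fun j => if j % 2 = 0 then 0 else 1
/-- `(10)^ω` over `{0,1}`. -/
def zOneZero : ℕ → Fin 2 := fun j => if j % 2 = 0 then 1 else 0


open Function

lemma shiftZ_iterate (m : ℕ) : (shiftZ^[m] : (ℤ → A) → (ℤ → A)) = fun x j => x (j + m) := by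
  induction m with
  | zero => funext x j; simp
  | succ m ih =>
    funext x j
    rw [iterate_succ_apply, ih]
    simp only [shiftZ, Nat.cast_succ, add_assoc]

lemma Function.Commute.translate {F : (ℤ → A) → (ℤ → A)} (hF : Function.Commute F shiftZ)
    (k : ℤ) : Function.Commute F (fun x j => x (j + k)) := by
  obtain ⟨m, rfl | rfl⟩ := Int.eq_nat_or_neg k
  · rw [← shiftZ_iterate]
    exact hF.iterate_right m
  · intro x
    have h := hF.iterate_right m (fun j => x (j - m))
    simp only [shiftZ_iterate] at h
    funext j
    simpa [← sub_eq_add_neg] using (congrFun h (j - m)).symm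

lemma caTrace_translate {F : (ℤ → A) → (ℤ → A)} (hF : Function.Commute F shiftZ)
    (x : ℤ → A) (i : ℤ) : caTrace F (fun j => x (j + i)) = fun t => F^[t] x i := by
  funext t
  simp only [caTrace, (hF.translate i).iterate_left t x, zero_add]

lemma column_mem_traceSubshift {F : (ℤ → A) → (ℤ → A)} (hF : Function.Commute F shiftZ)
    (x : ℤ → A) (i : ℤ) : (fun t => F^[t] x i) ∈ traceSubshift F :=
  ⟨_, caTrace_translate hF x i⟩

lemma Function.Periodic.apply_of_commute_shiftZ {F : (ℤ → A) → (ℤ → A)}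
    (hF : Function.Commute F shiftZ) {y : ℤ → A} {n : ℤ} (hy : Periodic y n) :
    Periodic (F y) n := by
  have h : F (fun j => y (j + n)) = fun j => F y (j + n) := hF.translate n y
  rw [show (fun j => y (j + n)) = y from funext hy] at h
  exact fun i => (congrFun h i).symm

lemma Continuous.exists_finset_forall_eq_imp_eq {ι X Y : Type*} [TopologicalSpace X]
    [TopologicalSpace Y] [DiscreteTopology Y] {f : (ι → X) → Y} (hf : Continuous f)
    (x : ι → X) : ∃ I : Finset ι, ∀ y, (∀ i ∈ I, y i = x i) → f y = f x := by
  obtain ⟨I, u, hu, hsub⟩ := isOpen_pi_iff.mp ((isOpen_discrete {f x}).preimage hf) x rfl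
  exact ⟨I, fun y hy => hsub fun i hi => hy i hi ▸ (hu i hi).2⟩

lemma exists_periodic_eqOn_finset {X : Type*} (x : ℤ → X) (I : Finset ℤ) :
    ∃ n : ℕ, n ≠ 0 ∧ ∃ y : ℤ → X, Periodic y n ∧ ∀ i ∈ I, y i = x i := by
  set m : ℕ := I.sup Int.natAbs
  refine ⟨2 * m + 1, by omega, fun i => x ((i + m) % (2 * m + 1 : ℕ) - m), fun i => ?_,
    fun i hi => ?_⟩
  · simp only [add_right_comm i, Int.add_emod_right]
  · have hi : i.natAbs ≤ m := Finset.le_sup hi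
    dsimp only
    rw [Int.emod_eq_of_lt (by omega) (by omega), add_sub_cancel_right]

lemma eq_one_sub_of_involutive {ι : Type*} [Fintype ι] [DecidableEq ι]
    {g : (ι → Fin 2) → (ι → Fin 2)} (hg : Involutive g) (hdisj : ∀ v i, ¬(v i = 1 ∧ g v i = 1))
    (v : ι → Fin 2) : g v = fun i => 1 - v i := by
  set c : (ι → Fin 2) → (ι → Fin 2) := fun v i => 1 - v i
  have hc : Involutive c := fun v => funext fun i => sub_sub_cancel 1 (v i)
  have hle : ∀ v i, (g v i).val ≤ (c v i).val := by
    have key : ∀ a b : Fin 2, ¬(a = 1 ∧ b = 1) → b.val ≤ (1 - a).val := by decide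
    exact fun v i => key _ _ (hdisj v i)
  have hsum : ∑ v, ∑ i, (g v i).val = ∑ v, ∑ i, (c v i).val := by
    rw [Fintype.sum_bijective g hg.bijective _ (fun v => ∑ i, (v i).val) fun _ => rfl,
      Fintype.sum_bijective c hc.bijective _ (fun v => ∑ i, (v i).val) fun _ => rfl]
  have hrow := (Finset.sum_eq_sum_iff_of_le fun v _ => Finset.sum_le_sum fun i _ => hle v i).mp
    hsum v (Finset.mem_univ v)
  funext i
  exact Fin.val_injective
    ((Finset.sum_eq_sum_iff_of_le fun i _ => hle v i).mp hrow i (Finset.mem_univ i))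

lemma Function.Commute.eq_one_sub_of_periodic {F : (ℤ → Fin 2) → (ℤ → Fin 2)}
    (hF : Function.Commute F shiftZ) (hinv : Involutive F)
    (hdisj : ∀ x i, ¬(x i = 1 ∧ F x i = 1)) {n : ℕ} (hn : n ≠ 0) {y : ℤ → Fin 2}
    (hy : Periodic y n) : F y = fun i => 1 - y i := by
  have : NeZero n := ⟨hn⟩
  -- `n`-periodic configurations are exactly the pullbacks of configurations on `ZMod n`
  let E : (ZMod n → Fin 2) → (ℤ → Fin 2) := fun u i => u i
  let R : (ℤ → Fin 2) → (ZMod n → Fin 2) := fun x a => x a.val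
  have hEval : ∀ u (a : ZMod n), E u a.val = u a := fun u a => by simp [E]
  have hER : ∀ x : ℤ → Fin 2, Periodic x n → E (R x) = x := fun x hx => funext fun i => by
    simpa only [E, R, ZMod.val_intCast, Int.emod_def, Int.cast_id, mul_comm (n : ℤ)] using
      hx.sub_int_mul_eq (i / n)
  have hEper : ∀ u, Periodic (E u) n := fun u i => by simp [E]
  let g := fun u => R (F (E u))
  have hFE : ∀ u, F (E u) = E (g u) := fun u =>
    (hER _ ((hEper u).apply_of_commute_shiftZ hF)).symm
  have hg : Involutive g := fun u => funext fun a => by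
    simp only [g, ← hFE, hinv (E u)]
    exact hEval u a
  have hgdisj : ∀ v a, ¬(v a = 1 ∧ g v a = 1) := fun v a => by
    simpa only [hEval] using hdisj (E v) a.val
  rw [← hER y hy, hFE, eq_one_sub_of_involutive hg hgdisj]

def altWords : Set (ℕ → Fin 2) := {zZero, zZeroOne, zOneZero}

lemma mem_altWords_iff {w : ℕ → Fin 2} :
    w ∈ altWords ↔ ∀ j, w (j + 2) = w j ∧ ¬(w j = 1 ∧ w (j + 1) = 1) := by
  constructor
  · rintro (rfl | rfl | rfl) j <;>
      rcases Nat.mod_two_eq_zero_or_one j with h | h <;>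
      simp [zZero, zZeroOne, zOneZero, Nat.add_mod_right, Nat.add_mod, h]
  · intro hw
    have hw' : w = fun j => if j % 2 = 0 then w 0 else w 1 := by
      funext j
      induction j using Nat.strong_induction_on with
      | _ j ih =>
        match j with
        | 0 => rfl
        | 1 => rfl
        | j + 2 => rw [(hw j).1, ih j (by omega), Nat.add_mod_right]
    have h01 := (hw 0).2
    rw [hw']
    generalize w 0 = a, w 1 = b at h01
    fin_cases a <;> fin_cases b
    · exact Or.inl (funext fun j => ite_self _)
    · exact Or.inr (Or.inl rfl)
    · exact Or.inr (Or.inr rfl)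
    · exact absurd ⟨rfl, rfl⟩ h01

lemma involutive_of_traceSubshift_subset_altWords {F : (ℤ → Fin 2) → (ℤ → Fin 2)}
    (hF : Function.Commute F shiftZ) (hτ : traceSubshift F ⊆ altWords) :
    Involutive F ∧ ∀ x i, ¬(x i = 1 ∧ F x i = 1) := by
  have hcol : ∀ x i, F (F x) i = x i ∧ ¬(x i = 1 ∧ F x i = 1) := fun x i =>
    mem_altWords_iff.mp (hτ (column_mem_traceSubshift hF x i)) 0
  exact ⟨fun x => funext fun i => (hcol x i).1, fun x i => (hcol x i).2⟩

lemma altWords_not_traceable : ¬ Traceable altWords := by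
  rintro ⟨F, ⟨hcont, hF : Function.Commute F shiftZ⟩, hτ⟩
  obtain ⟨hinv, hdisj⟩ := involutive_of_traceSubshift_subset_altWords hF hτ.le
  obtain ⟨x, hx⟩ : zZero ∈ traceSubshift F := hτ ▸ Or.inl rfl
  have hcont0 : Continuous fun y : ℤ → Fin 2 => (y 0, F y 0) := by fun_prop
  obtain ⟨I, hI⟩ := hcont0.exists_finset_forall_eq_imp_eq x
  obtain ⟨n, hn, y, hy, hyx⟩ := exists_periodic_eqOn_finset x I
  have hx0 : x 0 = 0 := congrFun hx 0
  have hFx0 : F x 0 = 0 := congrFun hx 1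
  obtain ⟨hy0, hFy0⟩ : y 0 = 0 ∧ F y 0 = 0 := by simpa [hx0, hFx0] using hI y hyx
  rw [hF.eq_one_sub_of_periodic hinv hdisj hn hy] at hFy0
  simp [hy0] at hFy0

def swapStep : Set ((Fin 2 → Fin 2) × (Fin 2 → Fin 2)) :=
  {p | (∀ q, p.2 q = p.1 q.rev) ∧ ¬∀ q, p.1 q = 1}

def swapPaths : Set (ℕ → Fin 2 → Fin 2) := {z | ∀ j, (z j, z (j + 1)) ∈ swapStep}

lemma isTwoSFT_swapPaths : IsTwoSFT swapPaths :=
  ⟨swapStepᶜ, by simp only [swapPaths, Set.mem_compl_iff, not_not]⟩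

lemma proj_image_swapPaths (q : Fin 2) : proj q '' swapPaths = altWords := by
  have hrev : ∀ q' : Fin 2, q' = q ∨ q' = q.rev := by fin_cases q <;> decide
  have hne : q.rev ≠ q := by fin_cases q <;> decide
  ext w
  rw [mem_altWords_iff]
  constructor
  · rintro ⟨z, hz, rfl⟩ j
    have hstep : ∀ j q, z (j + 1) q = z j q.rev := fun j => (hz j).1
    refine ⟨by simp only [proj, hstep, Fin.rev_rev], fun h => (hz j).2 fun q' => ?_⟩
    rcases hrev q' with rfl | rfl
    · exact h.1
    · simpa only [proj, hstep] using h.2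
  · intro hw
    refine ⟨fun j q' => if q' = q then w j else w (j + 1), fun j => ⟨fun q' => ?_, fun h => ?_⟩,
      funext fun j => if_pos rfl⟩
    · rcases hrev q' with rfl | rfl
      · simp [hne]
      · simp [hne, (hw j).1]
    · exact (hw j).2 ⟨by simpa using h q, by simpa [hne] using h q.rev⟩

lemma altWords_isT1 : IsT1 altWords :=
  ⟨2, two_pos, swapPaths, isTwoSFT_swapPaths, proj_image_swapPaths 0, by
    simp only [projAll, proj_image_swapPaths, Set.iUnion_const]⟩

/-- The subshift `{0^ω, (01)^ω, (10)^ω}` on `{0,1}` is T1 but not traceable. -/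
theorem stmt13 :
    IsT1 ({zZero, zZeroOne, zOneZero} : Set (ℕ → Fin 2)) ∧
      ¬ Traceable ({zZero, zZeroOne, zOneZero} : Set (ℕ → Fin 2)) :=
  ⟨altWords_isT1, altWords_not_traceable⟩
end
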